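/- arXiv:1203.1998 — 3 statements merged into one kernel-verified Lean document; each statement's English description precedes it below -/
import Mathlib

section
/- For all t ∈ (0, a] and α > 1, one has α·e^{-2a²} ≤ (1 - e^{-2t²})/(1 - e^{-2t²/α}) ≤ α. -/
open Real

/-! `y ↦ 1 - exp y` is concave and vanishes at `0`, which gives the upper bound (via Bernoulli's
inequality). For the lower bound, `1 - exp (y / α) ≤ -y / α` by the tangent line of `exp` at `0`,
while `1 - exp y ≥ -y * exp y` by the tangent line at `y`. -/

lemma one_sub_exp_le_mul_one_sub_exp_div {α : ℝ} (hα : 1 ≤ α) (y : ℝ) :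
    1 - exp y ≤ α * (1 - exp (y / α)) := by
  have hbernoulli := one_add_mul_self_le_rpow_one_add
    (by linarith [exp_pos (y / α)] : -1 ≤ exp (y / α) - 1) hα
  have hpow : exp (y / α) ^ α = exp y := by
    rw [← exp_mul, div_mul_cancel₀ y (by positivity)]
  rw [add_sub_cancel, hpow] at hbernoulli
  linarith

lemma neg_mul_exp_le_one_sub_exp (y : ℝ) : -y * exp y ≤ 1 - exp y := by
  have hinv : exp (-y) * exp y = 1 := by rw [← exp_add, neg_add_cancel, exp_zero]
  nlinarith [add_one_le_exp (-y), exp_pos y]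

lemma mul_exp_mul_one_sub_exp_div_le {α b y : ℝ} (hα : 0 < α) (hy : y ≤ 0) (hby : b ≤ y) :
    α * exp b * (1 - exp (y / α)) ≤ 1 - exp y := by
  have htangent : 1 - exp (y / α) ≤ -y / α := by
    linarith [add_one_le_exp (y / α), neg_div α y]
  calc α * exp b * (1 - exp (y / α))
      ≤ α * exp b * (-y / α) := by gcongr
    _ = -y * exp b := by field_simp
    _ ≤ -y * exp y := by gcongr; linarith
    _ ≤ 1 - exp y := neg_mul_exp_le_one_sub_exp y

theorem stmt_1_general (a α t : ℝ) (hα : 1 < α) (ht : t ∈ Set.Ioc 0 a) :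
    α * Real.exp (-2 * a ^ 2) ≤ (1 - Real.exp (-2 * t ^ 2)) / (1 - Real.exp (-2 * t ^ 2 / α)) ∧
    (1 - Real.exp (-2 * t ^ 2)) / (1 - Real.exp (-2 * t ^ 2 / α)) ≤ α := by
  obtain ⟨ht0, hta⟩ := ht
  have hα0 : 0 < α := by linarith
  have hy : -2 * t ^ 2 < 0 := by nlinarith
  have hden : 0 < 1 - exp (-2 * t ^ 2 / α) :=
    sub_pos.2 (exp_lt_one_iff.2 (div_neg_of_neg_of_pos hy hα0))
  constructor
  · rw [le_div_iff₀ hden]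
    exact mul_exp_mul_one_sub_exp_div_le hα0 hy.le (by nlinarith)
  · rw [div_le_iff₀ hden, mul_comm]
    exact one_sub_exp_le_mul_one_sub_exp_div hα.le _

theorem stmt_1 (a α t : ℝ) (ha : 0 < a) (hα : 1 < α) (ht : t ∈ Set.Ioc 0 a) :
    α * Real.exp (-2 * a ^ 2) ≤ (1 - Real.exp (-2 * t ^ 2)) / (1 - Real.exp (-2 * t ^ 2 / α)) ∧
    (1 - Real.exp (-2 * t ^ 2)) / (1 - Real.exp (-2 * t ^ 2 / α)) ≤ α :=
  stmt_1_general a α t hα ht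
end

section
/- For C > 0, a > 0, α > 1, t ∈ (0, a], and x, y ∈ R^n: exp(-C·|e^{-t²/α}x - y|²/(1 - e^{-2t²/α})) ≤ exp(-C·(α/(2e^{2a²}))·|e^{-t²}x - y|²/(1 - e^{-2t²})) · exp(C·t⁴|x|²/(1 - e^{-2t²/α})). -/
/-!
The Gaussian exponent changes in two ways when the Mehler parameter `e^{-t²/α}` is replaced
by `e^{-t²}`. The centres move by at most `t²|x|`, since both exponentials lie in `[1 - t², 1]`,
so `(p + q)² ≤ 2p² + 2q²` gives `|e^{-t²/α}x - y|² ≥ |e^{-t²}x - y|²/2 - t⁴|x|²`. The variances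
are comparable because `α(1 - e^{-s/α}) ≤ s ≤ e^s - 1` for `s = 2t²`, which yields
`α e^{-2a²} (1 - e^{-2t²/α}) ≤ 1 - e^{-2t²}`. Monotonicity of `exp` combines the two.
-/

open Real

lemma abs_exp_neg_sub_exp_neg_le {u v : ℝ} (hu : 0 ≤ u) (huv : u ≤ v) :
    |exp (-u) - exp (-v)| ≤ v := by
  have hexp_u : exp (-u) ≤ 1 := exp_le_one_iff.mpr (by linarith)
  have hexp_v : exp (-v) ≤ exp (-u) := exp_le_exp.mpr (by linarith)
  have hexp_v' : 1 - v ≤ exp (-v) := one_sub_le_exp_neg v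
  rw [abs_sub_le_iff]
  constructor <;> linarith

lemma norm_smul_sub_sq_div_two_sub_le {E : Type*} [SeminormedAddCommGroup E] [NormedSpace ℝ E]
    (r s : ℝ) (x y : E) :
    ‖s • x - y‖ ^ 2 / 2 - (s - r) ^ 2 * ‖x‖ ^ 2 ≤ ‖r • x - y‖ ^ 2 := by
  have htri : ‖s • x - y‖ ≤ ‖r • x - y‖ + |s - r| * ‖x‖ := by
    calc ‖s • x - y‖ = ‖(r • x - y) + (s - r) • x‖ := by rw [sub_smul]; abel_nf
      _ ≤ ‖r • x - y‖ + ‖(s - r) • x‖ := norm_add_le _ _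
      _ = ‖r • x - y‖ + |s - r| * ‖x‖ := by rw [norm_smul, Real.norm_eq_abs]
  have hsq : ‖s • x - y‖ ^ 2 ≤ (‖r • x - y‖ + |s - r| * ‖x‖) ^ 2 :=
    pow_le_pow_left₀ (norm_nonneg _) htri 2
  nlinarith [sq_nonneg (‖r • x - y‖ - |s - r| * ‖x‖), sq_abs (s - r)]

lemma norm_exp_neg_smul_sub_sq_div_two_sub_le {E : Type*} [SeminormedAddCommGroup E]
    [NormedSpace ℝ E] {α : ℝ} (t : ℝ) (hα : 1 ≤ α) (x y : E) :
    ‖exp (-t ^ 2) • x - y‖ ^ 2 / 2 - t ^ 4 * ‖x‖ ^ 2 ≤ ‖exp (-t ^ 2 / α) • x - y‖ ^ 2 := by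
  have hdist : |exp (-t ^ 2 / α) - exp (-t ^ 2)| ≤ t ^ 2 := by
    rw [neg_div]
    exact abs_exp_neg_sub_exp_neg_le (by positivity) (div_le_self (sq_nonneg t) hα)
  have hdist_sq : (exp (-t ^ 2) - exp (-t ^ 2 / α)) ^ 2 ≤ t ^ 4 := by
    rw [← sq_abs, abs_sub_comm]
    nlinarith [abs_nonneg (exp (-t ^ 2 / α) - exp (-t ^ 2))]
  nlinarith [norm_smul_sub_sq_div_two_sub_le (exp (-t ^ 2 / α)) (exp (-t ^ 2)) x y,
    sq_nonneg ‖x‖]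

lemma mul_exp_neg_mul_one_sub_exp_neg_div_le {α s b : ℝ} (hα : 0 < α) (hs : 0 ≤ s)
    (hsb : s ≤ b) :
    α * exp (-b) * (1 - exp (-s / α)) ≤ 1 - exp (-s) := by
  have hlin : α * (1 - exp (-s / α)) ≤ s := by
    have h := one_sub_le_exp_neg (s / α)
    rw [neg_div]
    calc α * (1 - exp (-(s / α))) ≤ α * (s / α) := by gcongr; linarith
      _ = s := mul_div_cancel₀ s hα.ne'
  have hexp : s ≤ exp s - 1 := by linarith [add_one_le_exp s]
  calc α * exp (-b) * (1 - exp (-s / α)) = exp (-b) * (α * (1 - exp (-s / α))) := by ring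
    _ ≤ exp (-b) * (exp s - 1) := by gcongr; linarith
    _ ≤ exp (-s) * (exp s - 1) := by gcongr; linarith
    _ = 1 - exp (-s) := by rw [mul_sub, ← exp_add, neg_add_cancel, exp_zero, mul_one]

theorem stmt_4_general {n : ℕ} (C a α t : ℝ) (hC : 0 < C) (hα : 1 < α)
    (ht : t ∈ Set.Ioc 0 a) (x y : EuclideanSpace ℝ (Fin n)) :
    Real.exp (-C * ‖Real.exp (-t ^ 2 / α) • x - y‖ ^ 2 / (1 - Real.exp (-2 * t ^ 2 / α))) ≤
      Real.exp (-C * (α / (2 * Real.exp (2 * a ^ 2))) *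
          ‖Real.exp (-t ^ 2) • x - y‖ ^ 2 / (1 - Real.exp (-2 * t ^ 2))) *
        Real.exp (C * t ^ 4 * ‖x‖ ^ 2 / (1 - Real.exp (-2 * t ^ 2 / α))) := by
  obtain ⟨ht0, hta⟩ := ht
  have hα0 : 0 < α := one_pos.trans hα
  have hvariance :
      α / exp (2 * a ^ 2) * (1 - exp (-2 * t ^ 2 / α)) ≤ 1 - exp (-2 * t ^ 2) := by
    have h := mul_exp_neg_mul_one_sub_exp_neg_div_le hα0 (s := 2 * t ^ 2) (b := 2 * a ^ 2)
      (by positivity) (by gcongr)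
    rwa [exp_neg, ← div_eq_mul_inv, ← neg_mul] at h
  set A := ‖exp (-t ^ 2 / α) • x - y‖
  set B := ‖exp (-t ^ 2) • x - y‖
  set Dα := 1 - exp (-2 * t ^ 2 / α)
  set D := 1 - exp (-2 * t ^ 2)
  have hDα : 0 < Dα := sub_pos.mpr (exp_lt_one_iff.mpr (div_neg_of_neg_of_pos (by nlinarith) hα0))
  have hD : 0 < D := sub_pos.mpr (exp_lt_one_iff.mpr (by nlinarith))
  have hcentre := norm_exp_neg_smul_sub_sq_div_two_sub_le t hα.le x y
  have hkernel : C * (α / (2 * exp (2 * a ^ 2))) * B ^ 2 / D ≤ C * (B ^ 2 / 2) / Dα := by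
    rw [div_le_div_iff₀ hD hDα]
    calc C * (α / (2 * exp (2 * a ^ 2))) * B ^ 2 * Dα
        = C * (B ^ 2 / 2) * (α / exp (2 * a ^ 2) * Dα) := by ring
      _ ≤ C * (B ^ 2 / 2) * D := by gcongr
  rw [← exp_add, exp_le_exp]
  calc -C * A ^ 2 / Dα ≤ -C * (B ^ 2 / 2 - t ^ 4 * ‖x‖ ^ 2) / Dα :=
        div_le_div_of_nonneg_right (by nlinarith) hDα.le
    _ = -(C * (B ^ 2 / 2) / Dα) + C * t ^ 4 * ‖x‖ ^ 2 / Dα := by ring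
    _ ≤ -(C * (α / (2 * exp (2 * a ^ 2))) * B ^ 2 / D) + C * t ^ 4 * ‖x‖ ^ 2 / Dα := by
        gcongr
    _ = -C * (α / (2 * exp (2 * a ^ 2))) * B ^ 2 / D + C * t ^ 4 * ‖x‖ ^ 2 / Dα := by ring

theorem stmt_4 {n : ℕ} (C a α t : ℝ) (hC : 0 < C) (ha : 0 < a) (hα : 1 < α)
    (ht : t ∈ Set.Ioc 0 a) (x y : EuclideanSpace ℝ (Fin n)) :
    Real.exp (-C * ‖Real.exp (-t ^ 2 / α) • x - y‖ ^ 2 / (1 - Real.exp (-2 * t ^ 2 / α))) ≤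
      Real.exp (-C * (α / (2 * Real.exp (2 * a ^ 2))) *
          ‖Real.exp (-t ^ 2) • x - y‖ ^ 2 / (1 - Real.exp (-2 * t ^ 2))) *
        Real.exp (C * t ^ 4 * ‖x‖ ^ 2 / (1 - Real.exp (-2 * t ^ 2 / α))) :=
  stmt_4_general C a α t hC hα ht x y
end

section
/- For every N ≥ 0 there exists a polynomial P_N in 2n+1 variables such that for all x, y ∈ R^n and s > 0, the N-th s-derivative of the Mehler kernel M_s(x,y) equals (1 - e^{-2s})^{-N}·P_N(e^{-s}, ((e^{-s}x_j - y_j)/√(1-e^{-2s}))_{j=1..n}, (√(1-e^{-2s})·x_j)_{j=1..n})·M_s(x,y). -/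
/-!
Write `u = e^{-s}`, `a = 1 - u²`, `v_j = (u x_j - y_j) / √a`, `w_j = √a x_j`. Each of `u`, `v_j`,
`w_j` and `log M_s = const - (n/2) log a - ∑ v_j²` has `s`-derivative `a⁻¹` times a polynomial in
`(u, v, w)`, and `(a⁻¹)' = a⁻² (-2u²)`. So differentiating `a⁻ᴺ P(u, v, w) M_s` gives
`a⁻ᴺ⁻¹ P'(u, v, w) M_s` with `P' = -2N u² P + D P + P R`, where `D` is the derivation of the
polynomial ring sending each variable to its derivative polynomial and `(log M_s)' = a⁻¹ R`.
-/

noncomputable def mehler (n : ℕ) (t : ℝ) (x y : EuclideanSpace ℝ (Fin n)) : ℝ :=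
  Real.pi ^ (-(n : ℝ) / 2) * (1 - Real.exp (-2 * t)) ^ (-(n : ℝ) / 2) *
    Real.exp (-‖Real.exp (-t) • x - y‖ ^ 2 / (1 - Real.exp (-2 * t)))

open MvPolynomial

section PolynomialChainRule

variable {𝕜 σ : Type*} [NontriviallyNormedField 𝕜]

theorem MvPolynomial.hasDerivAt_eval_mkDerivation {g : 𝕜 → σ → 𝕜} {q : σ → MvPolynomial σ 𝕜}
    {k s : 𝕜} (hg : ∀ i, HasDerivAt (fun t => g t i) (k * eval (g s) (q i)) s)
    (P : MvPolynomial σ 𝕜) :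
    HasDerivAt (fun t => eval (g t) P) (k * eval (g s) (mkDerivation 𝕜 q P)) s := by
  induction P using MvPolynomial.induction_on with
  | C a => simpa using hasDerivAt_const s a
  | add p p' hp hp' => simpa [mul_add] using hp.fun_add hp'
  | mul_X p i hp =>
    simp only [Derivation.leibniz, mkDerivation_X, smul_eq_mul, map_add, map_mul, eval_X]
    exact (hp.fun_mul (hg i)).congr_deriv (by ring)

variable (q : σ → MvPolynomial σ 𝕜) (c r : MvPolynomial σ 𝕜)

noncomputable def MvPolynomial.iteratedDerivPoly : ℕ → MvPolynomial σ 𝕜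
  | 0 => 1
  | N + 1 =>
    let P := iteratedDerivPoly N
    N * c * P + mkDerivation 𝕜 q P + P * r

variable {q c r} {g : 𝕜 → σ → 𝕜} {h f : 𝕜 → 𝕜}

theorem hasDerivAt_pow_mul_eval_mul {s : 𝕜} (hh : HasDerivAt h (h s ^ 2 * eval (g s) c) s)
    (hg : ∀ i, HasDerivAt (fun t => g t i) (h s * eval (g s) (q i)) s)
    (hf : HasDerivAt f (h s * eval (g s) r * f s) s) (N : ℕ) (P : MvPolynomial σ 𝕜) :
    HasDerivAt (fun t => h t ^ N * eval (g t) P * f t)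
      (h s ^ (N + 1) * eval (g s) (N * c * P + mkDerivation 𝕜 q P + P * r) * f s) s := by
  refine (((hh.fun_pow N).fun_mul (hasDerivAt_eval_mkDerivation hg P)).fun_mul hf).congr_deriv ?_
  simp only [map_add, map_mul, map_natCast]
  cases N with
  | zero =>
    simp only [Nat.cast_zero, zero_tsub, pow_zero, mul_one, zero_mul, one_mul, zero_add, pow_one]
    ring
  | succ N => rw [Nat.add_sub_cancel]; push_cast; ring

theorem iteratedDeriv_eq_pow_mul_eval_iteratedDerivPoly_mul {U : Set 𝕜} (hU : IsOpen U)
    (hh : ∀ s ∈ U, HasDerivAt h (h s ^ 2 * eval (g s) c) s)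
    (hg : ∀ s ∈ U, ∀ i, HasDerivAt (fun t => g t i) (h s * eval (g s) (q i)) s)
    (hf : ∀ s ∈ U, HasDerivAt f (h s * eval (g s) r * f s) s) (N : ℕ) :
    ∀ s ∈ U, iteratedDeriv N f s = h s ^ N * eval (g s) (iteratedDerivPoly q c r N) * f s := by
  induction N with
  | zero => simp [iteratedDerivPoly]
  | succ N ih =>
    intro s hs
    rw [iteratedDeriv_succ,
      Filter.EventuallyEq.deriv_eq (Filter.eventually_of_mem (hU.mem_nhds hs) ih)]
    exact (hasDerivAt_pow_mul_eval_mul (hh s hs) (hg s hs) (hf s hs) N _).deriv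

end PolynomialChainRule

open Real

noncomputable def mehlerCoords (n : ℕ) (x y : EuclideanSpace ℝ (Fin n)) (s : ℝ) :
    Unit ⊕ Fin n ⊕ Fin n → ℝ :=
  Sum.elim (fun _ => exp (-s))
    (Sum.elim (fun j => (exp (-s) * x j - y j) / √(1 - exp (-2 * s)))
      (fun j => √(1 - exp (-2 * s)) * x j))

-- With `a = 1 - u²`: `u' = -u` and `(√a)' = u² / √a`.
noncomputable def mehlerField (n : ℕ) :
    Unit ⊕ Fin n ⊕ Fin n → MvPolynomial (Unit ⊕ Fin n ⊕ Fin n) ℝ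
  | .inl _ => X (.inl ()) * (X (.inl ()) ^ 2 - 1)
  | .inr (.inl j) => -(X (.inl ()) * X (.inr (.inr j)) + X (.inl ()) ^ 2 * X (.inr (.inl j)))
  | .inr (.inr j) => X (.inl ()) ^ 2 * X (.inr (.inr j))

noncomputable def mehlerLogDerivPoly (n : ℕ) : MvPolynomial (Unit ⊕ Fin n ⊕ Fin n) ℝ :=
  C (-(n : ℝ)) * X (.inl ()) ^ 2 - 2 * ∑ j, X (.inr (.inl j)) * mehlerField n (.inr (.inl j))

section Mehler

variable {n : ℕ} {x y : EuclideanSpace ℝ (Fin n)} {s : ℝ}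

lemma one_sub_exp_neg_two_mul_pos (hs : 0 < s) : 0 < 1 - exp (-2 * s) :=
  sub_pos.2 (exp_lt_one_iff.2 (by linarith))

lemma exp_neg_two_mul (s : ℝ) : exp (-2 * s) = exp (-s) ^ 2 := by
  rw [sq, ← exp_add]; ring_nf

lemma hasDerivAt_one_sub_exp_neg_two_mul (s : ℝ) :
    HasDerivAt (fun t => 1 - exp (-2 * t)) (2 * exp (-s) ^ 2) s := by
  refine (((hasDerivAt_id s).const_mul (-2)).exp.const_sub 1).congr_deriv ?_
  rw [exp_neg_two_mul]; simp only [id, mul_one]; ring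

lemma hasDerivAt_sqrt_one_sub_exp_neg_two_mul (hs : 0 < s) :
    HasDerivAt (fun t => √(1 - exp (-2 * t))) (exp (-s) ^ 2 / √(1 - exp (-2 * s))) s := by
  refine ((hasDerivAt_one_sub_exp_neg_two_mul s).sqrt
    (one_sub_exp_neg_two_mul_pos hs).ne').congr_deriv ?_
  ring

lemma hasDerivAt_inv_one_sub_exp_neg_two_mul (hs : 0 < s) :
    HasDerivAt (fun t => (1 - exp (-2 * t))⁻¹)
      ((1 - exp (-2 * s))⁻¹ ^ 2 * (-2 * exp (-s) ^ 2)) s := by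
  refine ((hasDerivAt_one_sub_exp_neg_two_mul s).fun_inv
    (one_sub_exp_neg_two_mul_pos hs).ne').congr_deriv ?_
  field_simp

lemma hasDerivAt_mehlerCoords (hs : 0 < s) (i : Unit ⊕ Fin n ⊕ Fin n) :
    HasDerivAt (fun t => mehlerCoords n x y t i)
      ((1 - exp (-2 * s))⁻¹ * eval (mehlerCoords n x y s) (mehlerField n i)) s := by
  have ha := one_sub_exp_neg_two_mul_pos hs
  have hsqrt : √(1 - exp (-2 * s)) ^ 2 = 1 - exp (-2 * s) := sq_sqrt ha.le
  have hsqrt_pos : 0 < √(1 - exp (-2 * s)) := sqrt_pos.2 ha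
  have hexp : HasDerivAt (fun t => exp (-t)) (-exp (-s)) s := by
    simpa using (hasDerivAt_neg s).exp
  rcases i with _ | j | j <;>
    simp only [mehlerCoords, mehlerField, Sum.elim_inl, Sum.elim_inr, map_add, map_sub, map_neg,
      map_mul, map_pow, map_one, eval_X]
  · refine hexp.congr_deriv ?_
    rw [exp_neg_two_mul] at ha ⊢
    field_simp
    ring
  · refine (((hexp.mul_const (x j)).sub_const (y j)).fun_div
      (hasDerivAt_sqrt_one_sub_exp_neg_two_mul hs) hsqrt_pos.ne').congr_deriv ?_
    generalize √(1 - exp (-2 * s)) = r at hsqrt hsqrt_pos ⊢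
    rw [← hsqrt]
    field_simp
    ring
  · refine ((hasDerivAt_sqrt_one_sub_exp_neg_two_mul hs).mul_const (x j)).congr_deriv ?_
    generalize √(1 - exp (-2 * s)) = r at hsqrt hsqrt_pos ⊢
    rw [← hsqrt]
    field_simp

lemma mehler_eq_exp_neg_sum (hs : 0 < s) :
    mehler n s x y = π ^ (-(n : ℝ) / 2) * (1 - exp (-2 * s)) ^ (-(n : ℝ) / 2) *
      exp (-∑ j, mehlerCoords n x y s (.inr (.inl j)) ^ 2) := by
  have hsqrt : √(1 - exp (-2 * s)) ^ 2 = 1 - exp (-2 * s) :=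
    sq_sqrt (one_sub_exp_neg_two_mul_pos hs).le
  simp only [mehler, mehlerCoords, Sum.elim_inr, Sum.elim_inl, neg_div,
    EuclideanSpace.real_norm_sq_eq, Finset.sum_div, div_pow, hsqrt]
  rfl

lemma hasDerivAt_mehler (hs : 0 < s) :
    HasDerivAt (fun t => mehler n t x y)
      ((1 - exp (-2 * s))⁻¹ * eval (mehlerCoords n x y s) (mehlerLogDerivPoly n) *
        mehler n s x y) s := by
  have ha := one_sub_exp_neg_two_mul_pos hs
  have hpow := (hasDerivAt_one_sub_exp_neg_two_mul s).rpow_const (p := -(n : ℝ) / 2)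
    (Or.inl ha.ne')
  have hexp := (HasDerivAt.fun_sum (u := Finset.univ) fun j _ =>
    (hasDerivAt_mehlerCoords (x := x) (y := y) hs (.inr (.inl j))).fun_pow 2).fun_neg.exp
  refine (((hpow.const_mul (π ^ (-(n : ℝ) / 2))).fun_mul hexp).congr_deriv ?_)
    |>.congr_of_eventuallyEq ?_
  · rw [mehler_eq_exp_neg_sum hs]
    simp only [mehlerLogDerivPoly, map_sub, map_mul, map_sum, eval_C, eval_X, map_pow, map_ofNat]
    rw [rpow_sub_one ha.ne']
    simp only [Nat.cast_ofNat, Nat.add_one_sub_one, pow_one, mul_assoc,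
      mul_left_comm _ (1 - exp (-2 * s))⁻¹, ← Finset.mul_sum, mehlerCoords, Sum.elim_inl]
    field_simp
    ring
  · filter_upwards [Ioi_mem_nhds hs] with t ht
    exact mehler_eq_exp_neg_sum ht

end Mehler

theorem stmt_7 (n N : ℕ) :
    ∃ P : MvPolynomial (Unit ⊕ Fin n ⊕ Fin n) ℝ,
      ∀ (x y : EuclideanSpace ℝ (Fin n)) (s : ℝ), 0 < s →
        iteratedDeriv N (fun s => mehler n s x y) s =
          (1 - Real.exp (-2 * s))⁻¹ ^ N *
            MvPolynomial.eval
              (Sum.elim (fun _ : Unit => Real.exp (-s))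
                (Sum.elim
                  (fun j : Fin n =>
                    (Real.exp (-s) * x j - y j) / Real.sqrt (1 - Real.exp (-2 * s)))
                  (fun j : Fin n => Real.sqrt (1 - Real.exp (-2 * s)) * x j))) P *
            mehler n s x y := by
  refine ⟨iteratedDerivPoly (mehlerField n) (C (-2) * X (.inl ()) ^ 2) (mehlerLogDerivPoly n) N,
    fun x y s hs => ?_⟩
  have hinv (t : ℝ) (ht : t ∈ Set.Ioi 0) :
      HasDerivAt (fun t => (1 - exp (-2 * t))⁻¹) ((1 - exp (-2 * t))⁻¹ ^ 2 *
        eval (mehlerCoords n x y t) (C (-2) * X (.inl ()) ^ 2)) t := by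
    simpa [mehlerCoords] using hasDerivAt_inv_one_sub_exp_neg_two_mul ht
  exact iteratedDeriv_eq_pow_mul_eval_iteratedDerivPoly_mul isOpen_Ioi hinv
    (fun t ht => hasDerivAt_mehlerCoords ht) (fun t ht => hasDerivAt_mehler ht) N s hs
end
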